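/- If a closed two-sided ideal I of A satisfies N_{λ₀} ⊆ I for some λ₀ ∈ Λ, then N_λ ⊆ I for every λ ∈ Λ with λ ⊇ λ₀. -/

import Mathlib

open scoped Matrix.Norms.L2Operator ENNReal

noncomputable section
set_option synthInstance.maxHeartbeats 1000000
set_option maxHeartbeats 2000000
set_option linter.unusedSectionVars false

instance matrixNormedStarGroup {n : Type*} [Fintype n] [DecidableEq n] :
    NormedStarGroup (Matrix n n ℂ) := CStarRing.to_normedStarGroup

/-- a self-adjoint idempotent in a C*-algebra has norm at most one. -/
lemma norm_le_one_of_proj {E : Type*} [NonUnitalNormedRing E] [StarRing E] [CStarRing E]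
    {p : E} (h1 : star p = p) (h2 : p * p = p) : ‖p‖ ≤ 1 := by
  have h := CStarRing.norm_star_mul_self (x := p)
  rw [h1, h2] at h
  nlinarith [norm_nonneg p]

lemma star_stdBasisMatrix' {n : Type*} [Fintype n] [DecidableEq n] (a b : n) :
    star (Matrix.single a b (1 : ℂ)) = Matrix.single b a 1 := by
  ext i j
  simp only [Matrix.star_apply, Matrix.single, Matrix.of_apply]
  by_cases h1 : a = j <;> by_cases h2 : b = i <;> simp [h1, h2, and_comm]

lemma mul_collapse {n ι : Type*} [Fintype n] [DecidableEq n] [Fintype ι] [DecidableEq ι]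
    {f g k : ι → n} (hg : Function.Injective g) :
    (∑ u : ι, Matrix.single (f u) (g u) (1 : ℂ)) *
      (∑ u : ι, Matrix.single (g u) (k u) (1 : ℂ)) =
      ∑ u : ι, Matrix.single (f u) (k u) (1 : ℂ) := by
  rw [Finset.sum_mul_sum]
  refine Finset.sum_congr rfl fun u _ => ?_
  rw [Finset.sum_eq_single u]
  · rw [Matrix.single_mul_single_same, one_mul]
  · intro u' _ hne
    exact Matrix.single_mul_single_of_ne (h := hg.ne (Ne.symm hne)) ..
  · intro hu
    exact absurd (Finset.mem_univ u) hu

lemma norm_sum_std_le_one {n ι : Type*} [Fintype n] [DecidableEq n] [Fintype ι] [DecidableEq ι]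
    {f g : ι → n} (hf : Function.Injective f) (hg : Function.Injective g) :
    ‖∑ u : ι, Matrix.single (f u) (g u) (1 : ℂ)‖ ≤ 1 := by
  set v := ∑ u : ι, Matrix.single (f u) (g u) (1 : ℂ) with hv
  have hstar : star v = ∑ u : ι, Matrix.single (g u) (f u) (1 : ℂ) := by
    rw [hv, star_sum]
    exact Finset.sum_congr rfl fun u _ => star_stdBasisMatrix' _ _
  have hvv : star v * v = ∑ u : ι, Matrix.single (g u) (g u) (1 : ℂ) := by
    rw [hstar, hv]; exact mul_collapse hf
  have hproj : (∑ u : ι, Matrix.single (g u) (g u) (1 : ℂ)) *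
      (∑ u : ι, Matrix.single (g u) (g u) (1 : ℂ)) =
      ∑ u : ι, Matrix.single (g u) (g u) (1 : ℂ) := mul_collapse hg
  have hprojstar : star (∑ u : ι, Matrix.single (g u) (g u) (1 : ℂ)) =
      ∑ u : ι, Matrix.single (g u) (g u) (1 : ℂ) := by
    rw [star_sum]
    exact Finset.sum_congr rfl fun u _ => star_stdBasisMatrix' _ _
  have h1 : ‖star v * v‖ ≤ 1 := by
    rw [hvv]; exact norm_le_one_of_proj hprojstar hproj
  have h2 : ‖star v * v‖ = ‖v‖ * ‖v‖ := CStarRing.norm_star_mul_self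
  nlinarith [norm_nonneg v]

variable {X : Type*} [DecidableEq X]

/-- `l(λ)`: the set of bijections `t : {1,…,n} → λ` where `n = |λ|`, realized as the
equivalences `Fin λ.card ≃ λ`; in particular `l(∅)` is a one-point set. -/
abbrev Lbl (lam : Finset X) : Type _ := Fin lam.card ≃ {x // x ∈ lam}

/-- `M_λ`: a copy of the C*-algebra of `n! × n!` complex matrices (`n = |λ|`), with the
matrix unit `{e^{(λ)}_{s,t}}` indexed by `s, t ∈ l(λ)` (the standard basis matrices),
endowed with the operator norm. -/
abbrev Mlam (lam : Finset X) : Type _ := Matrix (Lbl lam) (Lbl lam) ℂ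

/-- The bounded product `∏_{μ∈Λ} M_μ` with the supremum norm. -/
abbrev ProdM (X : Type*) [DecidableEq X] : Type _ := lp (fun mu : Finset X => Mlam mu) ∞

/-- For disjoint finsets, `λ ∪ μ` is in bijection with `λ ⊕ μ`. -/
def unionEquiv {lam mu : Finset X} (h : Disjoint lam mu) :
    ({x // x ∈ lam} ⊕ {x // x ∈ mu}) ≃ {x // x ∈ lam ∪ mu} :=
  (Equiv.Set.union (Finset.disjoint_coe.mpr h)).symm.trans
    (Equiv.subtypeEquivRight fun x => by simp)

/-- The concatenation `ts ∈ l(λ∪μ)` of `t ∈ l(λ)` and `s ∈ l(μ)`, for disjoint `λ`, `μ`: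
`(ts)(i) = t(i)` for `1 ≤ i ≤ n` and `(ts)(i) = s(i-n)` for `n < i ≤ n+m`. -/
def concat {lam mu : Finset X} (h : Disjoint lam mu) (t : Lbl lam) (s : Lbl mu) :
    Lbl (lam ∪ mu) :=
  (finCongr (Finset.card_union_of_disjoint h)).trans
    ((finSumFinEquiv.symm).trans ((Equiv.sumCongr t s).trans (unionEquiv h)))

/-- Transport of labellings along an equality of finsets. -/
def lblCast {lam mu : Finset X} (h : lam = mu) : Lbl lam ≃ Lbl mu :=
  Equiv.cast (by rw [h])

/-- `su ∈ l(μ)`: the concatenation of `s ∈ l(λ)` and `u ∈ l(μ∖λ)`, for `λ ⊆ μ`. -/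
def extLbl {lam mu : Finset X} (h : lam ⊆ mu) (s : Lbl lam) (u : Lbl (mu \ lam)) : Lbl mu :=
  lblCast (Finset.union_sdiff_of_subset h) (concat Finset.disjoint_sdiff s u)

lemma concat_right_injective {lam mu : Finset X} (h : Disjoint lam mu) (t : Lbl lam) :
    Function.Injective fun s : Lbl mu => concat h t s := by
  intro u u' he
  ext j
  have h1 := congrArg (fun e : Lbl (lam ∪ mu) =>
    e ((finCongr (Finset.card_union_of_disjoint h)).symm (finSumFinEquiv (Sum.inr j)))) he
  simp only [concat, Equiv.trans_apply, Equiv.apply_symm_apply, Equiv.symm_apply_apply,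
    Equiv.sumCongr_apply, Sum.map_inr] at h1
  have h2 := (unionEquiv h).injective h1
  simpa using congrArg Subtype.val (Sum.inr.inj h2)

lemma extLbl_right_injective {lam mu : Finset X} (h : lam ⊆ mu) (s : Lbl lam) :
    Function.Injective fun u : Lbl (mu \ lam) => extLbl h s u := by
  intro u u' he
  exact concat_right_injective Finset.disjoint_sdiff s
    ((lblCast (Finset.union_sdiff_of_subset h)).injective he)

/-- `ι_{μ,λ} : M_λ → M_μ` (for `λ ⊆ μ`): the *-homomorphism determined by
`ι_{μ,λ}(e^{(λ)}_{s,t}) = ∑_{u ∈ l(μ∖λ)} e^{(μ)}_{su,tu}` and linearity. -/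
def iotaMat {lam mu : Finset X} (h : lam ⊆ mu) (x : Mlam lam) : Mlam mu :=
  ∑ s : Lbl lam, ∑ t : Lbl lam, ∑ u : Lbl (mu \ lam),
    x s t • Matrix.single (extLbl h s u) (extLbl h t u) (1 : ℂ)

lemma norm_iotaMat_le {lam mu : Finset X} (h : lam ⊆ mu) (x : Mlam lam) :
    ‖iotaMat h x‖ ≤ ∑ s : Lbl lam, ∑ t : Lbl lam, ‖x s t‖ := by
  refine (norm_sum_le _ _).trans (Finset.sum_le_sum fun s _ => ?_)
  refine (norm_sum_le _ _).trans (Finset.sum_le_sum fun t _ => ?_)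
  rw [← Finset.smul_sum, norm_smul]
  calc ‖x s t‖ * ‖∑ u : Lbl (mu \ lam),
        Matrix.single (extLbl h s u) (extLbl h t u) (1 : ℂ)‖
      ≤ ‖x s t‖ * 1 := by
        refine mul_le_mul_of_nonneg_left ?_ (norm_nonneg _)
        exact norm_sum_std_le_one (extLbl_right_injective h s) (extLbl_right_injective h t)
    _ = ‖x s t‖ := mul_one _

lemma memℓp_iota (lam : Finset X) (x : Mlam lam) :
    Memℓp (fun mu : Finset X => (if h : lam ⊆ mu then iotaMat h x else 0 : Mlam mu)) ∞ := by
  apply memℓp_infty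
  refine ⟨∑ s : Lbl lam, ∑ t : Lbl lam, ‖x s t‖, ?_⟩
  rintro r ⟨mu, rfl⟩
  dsimp only
  split_ifs with h
  · exact norm_iotaMat_le h x
  · simp only [norm_zero]
    positivity

/-- `ι_λ : M_λ → ∏_{μ∈Λ} M_μ`: `ι_λ(x)(μ) = ι_{μ,λ}(x)` if `λ ⊆ μ`, and `0` otherwise. -/
def iotaElem (lam : Finset X) (x : Mlam lam) : ProdM X :=
  ⟨fun mu => (if h : lam ⊆ mu then iotaMat h x else 0 : Mlam mu), memℓp_iota lam x⟩

/-- `f^{(λ)}_{s,t} = ι_λ(e^{(λ)}_{s,t})`. -/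
def fElem (lam : Finset X) (s t : Lbl lam) : ProdM X :=
  iotaElem lam (Matrix.single s t 1)

/-- `N_λ = ι_λ(M_λ) ⊆ ∏_{μ∈Λ} M_μ`. -/
def Nlam (lam : Finset X) : Set (ProdM X) := Set.range (iotaElem lam)

/-- `A_μ = Σ_{λ⊆μ} N_λ`: the linear span of `⋃_{λ⊆μ} N_λ`. -/
def NspanUpTo (mu : Finset X) : Submodule ℂ (ProdM X) :=
  Submodule.span ℂ (⋃ lam : Finset X, ⋃ (_ : lam ⊆ mu), Nlam lam)

/-- `Σ_{λ∈Λ} N_λ`: the linear span of `⋃_{λ∈Λ} N_λ`. -/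
def Nspan (X : Type*) [DecidableEq X] : Submodule ℂ (ProdM X) :=
  Submodule.span ℂ (⋃ lam : Finset X, Nlam lam)

/-- `A`: the closure of `Σ_{λ∈Λ} N_λ` in `∏_{μ∈Λ} M_μ`. -/
def carrierA (X : Type*) [DecidableEq X] : Set (ProdM X) :=
  closure ((Nspan X : Submodule ℂ (ProdM X)) : Set (ProdM X))

/-- `I` is (the carrier of) a closed two-sided ideal of (the C*-algebra whose carrier is)
`A`: a closed linear subspace of `A` absorbing multiplication by elements of `A`. -/
def IsClosedIdealIn (A I : Set (ProdM X)) : Prop :=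
  I ⊆ A ∧ IsClosed I ∧ (∃ J : Submodule ℂ (ProdM X), (J : Set (ProdM X)) = I) ∧
    ∀ a ∈ A, ∀ b ∈ I, a * b ∈ I ∧ b * a ∈ I

/-! ### Auxiliary lemmas for stmt17 -/

lemma lblCast_apply_coe {lam mu : Finset X} (h : lam = mu) (e : Lbl lam) (j : Fin mu.card) :
    ((lblCast h e j : {x // x ∈ mu}) : X) = (e (Fin.cast (by rw [h]) j) : X) := by
  subst h; rfl

lemma concat_apply_coe {lam mu : Finset X} (h : Disjoint lam mu) (t : Lbl lam) (s : Lbl mu)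
    (j : Fin (lam ∪ mu).card) :
    ((concat h t s j : {x // x ∈ lam ∪ mu}) : X) =
      if hj : (j : ℕ) < lam.card then (t ⟨j, hj⟩ : X)
      else (s ⟨(j : ℕ) - lam.card, by
        have hlt := j.isLt
        have hc := Finset.card_union_of_disjoint h
        omega⟩ : X) := by
  unfold concat
  simp only [Equiv.trans_apply, finCongr_apply]
  split_ifs with hj
  · have hcast : Fin.cast (Finset.card_union_of_disjoint h) j =
        Fin.castAdd mu.card ⟨(j : ℕ), hj⟩ := by
      ext; rfl
    rw [hcast, finSumFinEquiv_symm_apply_castAdd]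
    rfl
  · have hlt := j.isLt
    have hc := Finset.card_union_of_disjoint h
    have hcast : Fin.cast (Finset.card_union_of_disjoint h) j =
        Fin.natAdd lam.card ⟨(j : ℕ) - lam.card, by omega⟩ := by
      ext
      simp only [Fin.coe_cast, Fin.coe_natAdd]
      omega
    rw [hcast, finSumFinEquiv_symm_apply_natAdd]
    rfl

lemma extLbl_apply_coe {lam mu : Finset X} (h : lam ⊆ mu) (s : Lbl lam) (u : Lbl (mu \ lam))
    (j : Fin mu.card) :
    ((extLbl h s u j : {x // x ∈ mu}) : X) =
      if hj : (j : ℕ) < lam.card then (s ⟨j, hj⟩ : X)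
      else (u ⟨(j : ℕ) - lam.card, by
        have hlt := j.isLt
        have hc : (mu \ lam).card = mu.card - lam.card := Finset.card_sdiff_of_subset h
        have hle : lam.card ≤ mu.card := Finset.card_le_card h
        omega⟩ : X) := by
  unfold extLbl
  rw [lblCast_apply_coe, concat_apply_coe]
  simp only [Fin.coe_cast]

lemma sdiff_union_sdiff' {lam0 lam mu : Finset X} (h1 : lam0 ⊆ lam) (h2 : lam ⊆ mu) :
    (lam \ lam0) ∪ (mu \ lam) = mu \ lam0 := by
  ext x
  simp only [Finset.mem_union, Finset.mem_sdiff]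
  constructor
  · rintro (⟨hx, hx0⟩ | ⟨hx, hxl⟩)
    · exact ⟨h2 hx, hx0⟩
    · exact ⟨hx, fun hx0 => hxl (h1 hx0)⟩
  · rintro ⟨hx, hx0⟩
    by_cases hxl : x ∈ lam
    · exact Or.inl ⟨hxl, hx0⟩
    · exact Or.inr ⟨hx, hxl⟩

lemma disjoint_sdiff_sdiff'' {lam0 lam mu : Finset X} :
    Disjoint (lam \ lam0) (mu \ lam) :=
  Finset.disjoint_left.mpr fun _ hx hx' => (Finset.mem_sdiff.mp hx').2 (Finset.mem_sdiff.mp hx).1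

/-- concatenation of the "difference parts": `l(λ∖λ₀) × l(μ∖λ) → l(μ∖λ₀)`. -/
def catD {lam0 lam mu : Finset X} (h1 : lam0 ⊆ lam) (h2 : lam ⊆ mu)
    (u : Lbl (lam \ lam0)) (v : Lbl (mu \ lam)) : Lbl (mu \ lam0) :=
  lblCast (sdiff_union_sdiff' h1 h2) (concat disjoint_sdiff_sdiff'' u v)

lemma extLbl_assoc {lam0 lam mu : Finset X} (h1 : lam0 ⊆ lam) (h2 : lam ⊆ mu)
    (a : Lbl lam0) (u : Lbl (lam \ lam0)) (v : Lbl (mu \ lam)) :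
    extLbl h2 (extLbl h1 a u) v = extLbl (h1.trans h2) a (catD h1 h2 u v) := by
  have hc1 : lam0.card ≤ lam.card := Finset.card_le_card h1
  have hc2 : lam.card ≤ mu.card := Finset.card_le_card h2
  have hs1 : (lam \ lam0).card = lam.card - lam0.card := Finset.card_sdiff_of_subset h1
  have hs2 : (mu \ lam).card = mu.card - lam.card := Finset.card_sdiff_of_subset h2
  have hs3 : (mu \ lam0).card = mu.card - lam0.card := Finset.card_sdiff_of_subset (h1.trans h2)
  apply Equiv.ext; intro j
  apply Subtype.ext
  have hlt := j.isLt
  rw [extLbl_apply_coe, extLbl_apply_coe]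
  by_cases hj : (j : ℕ) < lam.card
  · rw [dif_pos hj]
    rw [extLbl_apply_coe]
    by_cases hj0 : (j : ℕ) < lam0.card
    · rw [dif_pos hj0, dif_pos hj0]
    · rw [dif_neg hj0, dif_neg hj0]
      unfold catD
      rw [lblCast_apply_coe, concat_apply_coe]
      rw [dif_pos (show ((Fin.cast (by rw [sdiff_union_sdiff' h1 h2])
        (⟨(j : ℕ) - lam0.card, by omega⟩ : Fin (mu \ lam0).card) : Fin _) : ℕ)
          < (lam \ lam0).card by
        simp only [Fin.coe_cast]
        omega)]
      exact congrArg Subtype.val (congrArg u (Fin.ext (by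
        simp only [Fin.coe_cast])))
  · rw [dif_neg hj]
    have hj0 : ¬ (j : ℕ) < lam0.card := by omega
    rw [dif_neg hj0]
    unfold catD
    rw [lblCast_apply_coe, concat_apply_coe]
    rw [dif_neg (show ¬ ((Fin.cast (by rw [sdiff_union_sdiff' h1 h2])
      (⟨(j : ℕ) - lam0.card, by omega⟩ : Fin (mu \ lam0).card) : Fin _) : ℕ)
        < (lam \ lam0).card by
      simp only [Fin.coe_cast]
      omega)]
    exact congrArg Subtype.val (congrArg v (Fin.ext (by
      simp only [Fin.coe_cast]
      omega)))

lemma iotaMat_stdBasisMatrix {lam mu : Finset X} (h : lam ⊆ mu) (s t : Lbl lam) :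
    iotaMat h (Matrix.single s t (1 : ℂ)) =
      ∑ u : Lbl (mu \ lam), Matrix.single (extLbl h s u) (extLbl h t u) (1 : ℂ) := by
  unfold iotaMat
  have key : ∀ s' t' : Lbl lam,
      (∑ u : Lbl (mu \ lam), Matrix.single s t (1 : ℂ) s' t' •
        Matrix.single (extLbl h s' u) (extLbl h t' u) (1 : ℂ)) =
      if s = s' then (if t = t' then
        ∑ u : Lbl (mu \ lam),
          Matrix.single (extLbl h s' u) (extLbl h t' u) (1 : ℂ) else 0) else 0 := by
    intro s' t'
    by_cases hs : s = s'
    · by_cases ht : t = t'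
      · simp [Matrix.single, hs, ht]
      · simp [Matrix.single, hs, ht]
    · simp [Matrix.single, hs]
  calc (∑ s' : Lbl lam, ∑ t' : Lbl lam, ∑ u : Lbl (mu \ lam),
        Matrix.single s t (1 : ℂ) s' t' •
          Matrix.single (extLbl h s' u) (extLbl h t' u) (1 : ℂ))
      = ∑ s' : Lbl lam, ∑ t' : Lbl lam, (if s = s' then (if t = t' then
          ∑ u : Lbl (mu \ lam),
            Matrix.single (extLbl h s' u) (extLbl h t' u) (1 : ℂ) else 0) else 0) :=
        Finset.sum_congr rfl fun s' _ => Finset.sum_congr rfl fun t' _ => key s' t'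
    _ = _ := by
        simp [Finset.sum_ite_eq]

lemma mul_collapse' {n ι ι' : Type*} [Fintype n] [DecidableEq n] [Fintype ι] [Fintype ι']
    [DecidableEq ι'] {f g : ι → n} {g' : ι' → n} (hg' : Function.Injective g')
    (hsub : ∀ u, ∃ w, g u = g' w) :
    (∑ u : ι, Matrix.single (f u) (g u) (1 : ℂ)) *
      (∑ w : ι', Matrix.single (g' w) (g' w) (1 : ℂ)) =
      ∑ u : ι, Matrix.single (f u) (g u) (1 : ℂ) := by
  rw [Finset.sum_mul_sum]
  refine Finset.sum_congr rfl fun u _ => ?_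
  obtain ⟨w0, hw0⟩ := hsub u
  rw [Finset.sum_eq_single w0]
  · rw [hw0, Matrix.single_mul_single_same, one_mul]
  · intro w _ hne
    refine Matrix.single_mul_single_of_ne (h := fun hgw => hne ?_) ..
    exact hg' (hw0.symm.trans hgw).symm
  · intro hw; exact absurd (Finset.mem_univ w0) hw

lemma iotaElem_coeFn_apply (lam : Finset X) (x : Mlam lam) (mu : Finset X) :
    (iotaElem lam x : ∀ nu : Finset X, Mlam nu) mu =
      (if h : lam ⊆ mu then iotaMat h x else 0) := rfl

lemma Nlam_subset_carrierA (lam : Finset X) : Nlam lam ⊆ carrierA X := fun x hx =>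
  subset_closure (Submodule.subset_span (Set.mem_iUnion.mpr ⟨lam, hx⟩))

lemma fElem_mul_fElem (lam : Finset X) (s q t : Lbl lam) :
    fElem lam s q * fElem lam q t = fElem lam s t := by
  apply lp.ext
  rw [lp.infty_coeFn_mul]
  funext mu
  simp only [Pi.mul_apply, fElem, iotaElem_coeFn_apply]
  by_cases h : lam ⊆ mu
  · rw [dif_pos h, dif_pos h, dif_pos h, iotaMat_stdBasisMatrix, iotaMat_stdBasisMatrix,
      iotaMat_stdBasisMatrix]
    exact mul_collapse (extLbl_right_injective h q)
  · simp only [dif_neg h, zero_mul]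

lemma fElem_mul_proj (lam0 lam : Finset X) (h1 : lam0 ⊆ lam) (s : Lbl lam)
    (a : Lbl lam0) (u0 : Lbl (lam \ lam0)) :
    fElem lam s (extLbl h1 a u0) * fElem lam0 a a = fElem lam s (extLbl h1 a u0) := by
  apply lp.ext
  rw [lp.infty_coeFn_mul]
  funext mu
  simp only [Pi.mul_apply, fElem, iotaElem_coeFn_apply]
  by_cases h : lam ⊆ mu
  · rw [dif_pos h, dif_pos (h1.trans h), iotaMat_stdBasisMatrix,
      iotaMat_stdBasisMatrix]
    refine mul_collapse' (extLbl_right_injective (h1.trans h) a) fun v => ?_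
    exact ⟨catD h1 h u0 v, extLbl_assoc h1 h a u0 v⟩
  · simp only [dif_neg h, zero_mul]

lemma iotaElem_eq_sum_fElem (lam : Finset X) (m : Mlam lam) :
    iotaElem lam m = ∑ s : Lbl lam, ∑ t : Lbl lam, m s t • fElem lam s t := by
  apply lp.ext
  funext mu
  rw [lp.coeFn_sum]
  simp only [Finset.sum_apply]
  have hterm : ∀ s : Lbl lam,
      ((∑ t : Lbl lam, m s t • fElem lam s t : ProdM X) : ∀ nu : Finset X, Mlam nu) mu =
      ∑ t : Lbl lam, m s t • ((fElem lam s t : ProdM X) : ∀ nu : Finset X, Mlam nu) mu := by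
    intro s
    rw [lp.coeFn_sum]
    simp only [Finset.sum_apply]
    refine Finset.sum_congr rfl fun t _ => ?_
    rw [lp.coeFn_smul]
    rfl
  rw [Finset.sum_congr rfl fun s _ => hterm s]
  simp only [fElem, iotaElem_coeFn_apply]
  by_cases h : lam ⊆ mu
  · rw [dif_pos h]
    simp only [dif_pos h]
    have hst : ∀ s t : Lbl lam, m s t • iotaMat h (Matrix.single s t (1 : ℂ)) =
        ∑ u : Lbl (mu \ lam),
          m s t • Matrix.single (extLbl h s u) (extLbl h t u) (1 : ℂ) := by
      intro s t
      rw [iotaMat_stdBasisMatrix, Finset.smul_sum]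
    rw [Finset.sum_congr rfl fun s _ => Finset.sum_congr rfl fun t _ => hst s t]
    rfl
  · rw [dif_neg h]
    simp only [dif_neg h, smul_zero, Finset.sum_const_zero]

/- STATEMENT 17: if a closed two-sided ideal `I` of `A` contains `N_{λ₀}`, then it
contains `N_λ` for every `λ ⊇ λ₀`. -/
theorem stmt17 [Uncountable X] (I : Set (ProdM X))
    (hI : IsClosedIdealIn (carrierA X) I) (lam0 : Finset X) (h0 : Nlam lam0 ⊆ I) :
    ∀ lam : Finset X, lam0 ⊆ lam → Nlam lam ⊆ I := by
  intro lam hsub x hx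
  obtain ⟨hIA, _hIclosed, ⟨J, hJ⟩, hmul⟩ := hI
  obtain ⟨m, rfl⟩ := hx
  -- every matrix unit `f^{(λ)}_{s,t}` lies in `I`
  have hf : ∀ s t : Lbl lam, fElem lam s t ∈ I := by
    intro s t
    set a : Lbl lam0 := (Fintype.equivFinOfCardEq (Fintype.card_coe lam0)).symm with ha
    set u0 : Lbl (lam \ lam0) :=
      (Fintype.equivFinOfCardEq (Fintype.card_coe (lam \ lam0))).symm with hu0
    set q : Lbl lam := extLbl hsub a u0 with hq
    have haI : fElem lam0 a a ∈ I := h0 ⟨Matrix.single a a 1, rfl⟩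
    have h1 : fElem lam s q * fElem lam0 a a ∈ I :=
      (hmul _ (Nlam_subset_carrierA lam ⟨Matrix.single s q 1, rfl⟩) _ haI).1
    rw [fElem_mul_proj lam0 lam hsub s a u0] at h1
    have h2 : fElem lam s q * fElem lam q t ∈ I :=
      (hmul _ (Nlam_subset_carrierA lam ⟨Matrix.single q t 1, rfl⟩) _ h1).2
    rwa [fElem_mul_fElem] at h2
  -- decompose the element as a linear combination of matrix units
  rw [iotaElem_eq_sum_fElem, ← hJ]
  refine Submodule.sum_mem _ fun s _ => Submodule.sum_mem _ fun t _ =>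
    Submodule.smul_mem _ _ ?_
  rw [← SetLike.mem_coe, hJ]
  exact hf s t

end
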